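/- arXiv:1409.2196 — 2 statements merged into one kernel-verified Lean document; each statement's English description precedes it below -/
import Mathlib

section
/- Let u, ω : [0,1] → ℝ be continuous with u(r)·ω(r) > 0 for all r ∈ [0,1]. Suppose φ : [0,1] → ℝ is a nonzero C² function with φ(0) = 0, φ(1) = 0, satisfying d/dr((1/r)φ'(r)) - (n²/r)φ(r) = (2C·u(r)·ω(r)/r)·φ(r) on (0,1) for some constant C and integer n, and that (1/r)φ'(r)φ(r) → 0 as r → 0⁺. Then C < 0. -/
/-!
With `p r = 1 / r` and `q r = (n² + 2 C u(r) ω(r)) / r`, the equation reads `(p φ')' = q φ`,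
so the boundary term `F = p φ' φ` of the paper's integration by parts satisfies
`F' = q φ² + p φ'²`. If `C ≥ 0` then `q ≥ 0`, so `F` is monotone on `(0, 1)`; it tends to `0`
at both ends, hence vanishes identically, and then `F' = 0` forces `φ' = 0`. Thus `φ` is
constant, equal to `φ 1 = 0`, contradicting `φ ≢ 0`.
-/

open Set Filter Topology

theorem MonotoneOn.eqOn_const_of_tendsto {α β : Type*} [LinearOrder α] [TopologicalSpace α]
    [OrderTopology α] [DenselyOrdered α] [LinearOrder β] [TopologicalSpace β]
    [OrderClosedTopology β]
    {f : α → β} {a b : α} {c : β} (hf : MonotoneOn f (Ioo a b))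
    (ha : Tendsto f (𝓝[>] a) (𝓝 c)) (hb : Tendsto f (𝓝[<] b) (𝓝 c)) :
    EqOn f (fun _ ↦ c) (Ioo a b) := by
  intro x hx
  have : (𝓝[>] a).NeBot := nhdsGT_neBot_of_exists_gt ⟨x, hx.1⟩
  have : (𝓝[<] b).NeBot := nhdsLT_neBot_of_exists_lt ⟨x, hx.2⟩
  apply le_antisymm
  · refine ge_of_tendsto hb ?_
    filter_upwards [Ioo_mem_nhdsLT hx.2] with s hs
    exact hf hx ⟨hx.1.trans hs.1, hs.2⟩ hs.1.le
  · refine le_of_tendsto ha ?_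
    filter_upwards [Ioo_mem_nhdsGT hx.1] with s hs
    exact hf ⟨hs.1, hs.2.trans hx.2⟩ hx hs.2.le

theorem eqOn_right_of_hasDerivAt_zero {f : ℝ → ℝ} {a b : ℝ} (hf : ContinuousOn f (Icc a b))
    (hderiv : ∀ x ∈ Ioo a b, HasDerivAt f 0 x) : EqOn f (fun _ ↦ f b) (Icc a b) := by
  intro x hx
  rcases hx.2.eq_or_lt with rfl | hxb
  · rfl
  obtain ⟨c, hc, hslope⟩ := exists_hasDerivAt_eq_slope f (fun _ ↦ 0) hxb
    (hf.mono (Icc_subset_Icc_left hx.1)) fun y hy ↦ hderiv y ⟨hx.1.trans_lt hy.1, hy.2⟩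
  rw [eq_comm, div_eq_zero_iff, sub_eq_zero, sub_eq_zero] at hslope
  exact (hslope.resolve_right hxb.ne').symm

section SturmLiouville

variable {p q φ φ' : ℝ → ℝ}

theorem hasDerivAt_flux_mul_self {x : ℝ} (hφ : HasDerivAt φ (φ' x) x)
    (hode : HasDerivAt (fun s ↦ p s * φ' s) (q x * φ x) x) :
    HasDerivAt (fun s ↦ p s * φ' s * φ s) (q x * φ x ^ 2 + p x * φ' x ^ 2) x :=
  (hode.mul hφ).congr_deriv (by ring)

theorem eqOn_zero_of_flux_mul_self_tendsto {a b : ℝ} (hp : ∀ x ∈ Ioo a b, 0 < p x)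
    (hq : ∀ x ∈ Ioo a b, 0 ≤ q x) (hφ : ∀ x ∈ Ioo a b, HasDerivAt φ (φ' x) x)
    (hode : ∀ x ∈ Ioo a b, HasDerivAt (fun s ↦ p s * φ' s) (q x * φ x) x)
    (ha : Tendsto (fun s ↦ p s * φ' s * φ s) (𝓝[>] a) (𝓝 0))
    (hb : Tendsto (fun s ↦ p s * φ' s * φ s) (𝓝[<] b) (𝓝 0)) :
    EqOn φ' 0 (Ioo a b) := by
  have hF x (hx : x ∈ Ioo a b) := hasDerivAt_flux_mul_self (hφ x hx) (hode x hx)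
  have hF_nonneg x (hx : x ∈ Ioo a b) : 0 ≤ q x * φ x ^ 2 + p x * φ' x ^ 2 := by
    have := hp x hx; have := hq x hx; positivity
  have hmono : MonotoneOn (fun s ↦ p s * φ' s * φ s) (Ioo a b) := by
    refine monotoneOn_of_hasDerivWithinAt_nonneg (f' := fun x ↦ q x * φ x ^ 2 + p x * φ' x ^ 2)
      (convex_Ioo a b) (fun x hx ↦ (hF x hx).continuousAt.continuousWithinAt) ?_ ?_ <;>
      rw [interior_Ioo]
    · exact fun x hx ↦ (hF x hx).hasDerivWithinAt
    · exact hF_nonneg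
  intro x hx
  have hF_zero : q x * φ x ^ 2 + p x * φ' x ^ 2 = 0 :=
    (hF x hx).unique <| (hasDerivAt_const x 0).congr_of_eventuallyEq <|
      (hmono.eqOn_const_of_tendsto ha hb).eventuallyEq_of_mem (isOpen_Ioo.mem_nhds hx)
  have hflux : p x * φ' x ^ 2 = 0 :=
    le_antisymm (by nlinarith [mul_nonneg (hq x hx) (sq_nonneg (φ x))])
      (mul_nonneg (hp x hx).le (sq_nonneg _))
  simpa [(hp x hx).ne'] using hflux

end SturmLiouville

theorem sturm_liouville_eigenvalue_negative_general
    (u ω : ℝ → ℝ)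
    (hpos : ∀ r ∈ Icc (0:ℝ) 1, 0 < u r * ω r)
    (n : ℤ) (C : ℝ) (φ : ℝ → ℝ) (hφ : ContDiff ℝ 2 φ)
    (hφne : ∃ r ∈ Icc (0:ℝ) 1, φ r ≠ 0)
    (hφ1 : φ 1 = 0)
    (hODE : ∀ r ∈ Ioo (0:ℝ) 1,
      deriv (fun s => (1 / s) * deriv φ s) r - ((n : ℝ) ^ 2 / r) * φ r
        = (2 * C * u r * ω r / r) * φ r)
    (hlim : Tendsto (fun r => (1 / r) * deriv φ r * φ r)
      (nhdsWithin 0 (Ioi 0)) (nhds 0)) :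
    C < 0 := by
  by_contra! hC
  have hφd : Differentiable ℝ φ := hφ.differentiable (by norm_num)
  have hφd' : Differentiable ℝ (deriv φ) := hφ.differentiable_deriv_two
  have hode : ∀ r ∈ Ioo (0:ℝ) 1, HasDerivAt (fun s ↦ 1 / s * deriv φ s)
      (((n : ℝ) ^ 2 + 2 * C * u r * ω r) / r * φ r) r := by
    intro r hr
    have hdiff : DifferentiableAt ℝ (fun s ↦ 1 / s * deriv φ s) r :=
      ((differentiableAt_const 1).div differentiableAt_id hr.1.ne').mul (hφd' r)
    refine hdiff.hasDerivAt.congr_deriv ?_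
    linear_combination hODE r hr
  have hq : ∀ r ∈ Ioo (0:ℝ) 1, 0 ≤ ((n : ℝ) ^ 2 + 2 * C * u r * ω r) / r := fun r hr ↦
    div_nonneg (by nlinarith [hpos r (Ioo_subset_Icc_self hr), sq_nonneg (n : ℝ)]) hr.1.le
  have hlim_one : Tendsto (fun r ↦ 1 / r * deriv φ r * φ r) (𝓝[<] 1) (𝓝 0) := by
    have hcont : ContinuousAt (fun r ↦ 1 / r * deriv φ r * φ r) 1 :=
      ((continuousAt_const.div continuousAt_id one_ne_zero).mul hφd'.continuous.continuousAt).mul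
        hφd.continuous.continuousAt
    simpa [hφ1] using hcont.tendsto.mono_left nhdsWithin_le_nhds
  have hφ'_zero := eqOn_zero_of_flux_mul_self_tendsto (fun r hr ↦ one_div_pos.2 hr.1) hq
    (fun r _ ↦ (hφd r).hasDerivAt) hode hlim hlim_one
  have hφ_const : EqOn φ (fun _ ↦ φ 1) (Icc 0 1) :=
    eqOn_right_of_hasDerivAt_zero hφd.continuous.continuousOn fun r hr ↦ by
      simpa [hφ'_zero hr] using (hφd r).hasDerivAt
  obtain ⟨r, hr, hne⟩ := hφne
  exact hne ((hφ_const hr).trans hφ1)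

/-- Eigenvalues of the singular Sturm–Liouville problem are strictly negative
when `u·ω > 0`. -/
theorem sturm_liouville_eigenvalue_negative
    (u ω : ℝ → ℝ) (hu : ContinuousOn u (Icc 0 1)) (hω : ContinuousOn ω (Icc 0 1))
    (hpos : ∀ r ∈ Icc (0:ℝ) 1, 0 < u r * ω r)
    (n : ℤ) (C : ℝ) (φ : ℝ → ℝ) (hφ : ContDiff ℝ 2 φ)
    (hφne : ∃ r ∈ Icc (0:ℝ) 1, φ r ≠ 0)
    (hφ0 : φ 0 = 0) (hφ1 : φ 1 = 0)
    (hODE : ∀ r ∈ Ioo (0:ℝ) 1,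
      deriv (fun s => (1 / s) * deriv φ s) r - ((n : ℝ) ^ 2 / r) * φ r
        = (2 * C * u r * ω r / r) * φ r)
    (hlim : Tendsto (fun r => (1 / r) * deriv φ r * φ r)
      (nhdsWithin 0 (Ioi 0)) (nhds 0)) :
    C < 0 :=
  sturm_liouville_eigenvalue_negative_general u ω hpos n C φ hφ hφne hφ1 hODE hlim
end

section
/- Suppose F : [0,1] → ℝ is continuous with F(r) > 0 on (0,1]. Then the quadratic form Q(g) = ∫₀¹ (1/r)|g(r)|² F(r) dr on C¹ functions g vanishing at 0 satisfies: Q(g) = 0 implies g ≡ 0, but for g_k(r) = sin(kπr)/k the ratio Q(g_k)/∫₀¹((1/r)|g_k|² + |g_k'|²)dr → 0 as k → ∞, provided F is bounded. -/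
/-!
Definiteness: on `(0, 1]` the integrand `(1/r) g² F` is nonnegative, so a vanishing integral
forces `g = 0` almost everywhere there, hence everywhere by continuity.

Degeneracy: since `sin² x ≤ x` for `x ≥ 0`, the weight `(1/r) (sin (kπr)/k)²` is at most `π/k`, so
the numerator is `O(M/k)`, while `g_k' = π cos (kπr)` keeps the denominator at least `π²/2`.
-/

open Set Real Filter MeasureTheory

theorem Continuous.eqOn_zero_of_intervalIntegral_mul_sq_eq_zero {g w : ℝ → ℝ} {a b : ℝ}
    (hab : a ≤ b) (hg : Continuous g) (hw : ∀ r ∈ Ioc a b, 0 < w r)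
    (hint : IntervalIntegrable (fun r => w r * g r ^ 2) volume a b)
    (h : ∫ r in a..b, w r * g r ^ 2 = 0) : EqOn g 0 (Ioc a b) := by
  have hnonneg : 0 ≤ᵐ[volume.restrict (Ioc a b)] fun r => w r * g r ^ 2 := by
    filter_upwards [ae_restrict_mem measurableSet_Ioc] with r hr
    exact mul_nonneg (hw r hr).le (sq_nonneg _)
  have hzero := (intervalIntegral.integral_eq_zero_iff_of_le_of_nonneg_ae hab hnonneg hint).1 h
  have hg_ae : g =ᵐ[volume.restrict (Ioc a b)] 0 := by
    filter_upwards [hzero, ae_restrict_mem measurableSet_Ioc] with r hr hmem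
    simpa [(hw r hmem).ne'] using hr
  exact Measure.eqOn_Ioc_of_ae_eq _ hg_ae hg.continuousOn continuousOn_const

theorem Real.sin_sq_le_self {x : ℝ} (hx : 0 ≤ x) : sin x ^ 2 ≤ x := by
  calc sin x ^ 2 = |sin x| * |sin x| := by rw [← sq_abs, sq]
    _ ≤ 1 * |x| := mul_le_mul (abs_sin_le_one x) abs_sin_le_abs (abs_nonneg _) zero_le_one
    _ = x := by rw [one_mul, abs_of_nonneg hx]

section SineModes

variable {k : ℝ}

theorem inv_mul_sin_div_sq_le (hk : 0 < k) {r : ℝ} (hr : 0 < r) :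
    1 / r * (sin (k * π * r) / k) ^ 2 ≤ π / k := by
  have hsin : sin (k * π * r) ^ 2 ≤ k * π * r := sin_sq_le_self (by positivity)
  calc 1 / r * (sin (k * π * r) / k) ^ 2 = sin (k * π * r) ^ 2 / (r * k ^ 2) := by
        field_simp
    _ ≤ k * π * r / (r * k ^ 2) := by gcongr
    _ = π / k := by field_simp

theorem intervalIntegrable_inv_mul_sin_div_sq (hk : 0 < k) :
    IntervalIntegrable (fun r => 1 / r * (sin (k * π * r) / k) ^ 2) volume 0 1 := by
  refine (intervalIntegrable_const (c := π / k)).mono_fun' (by fun_prop) ?_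
  rw [uIoc_of_le zero_le_one]
  filter_upwards [ae_restrict_mem measurableSet_Ioc] with r hr
  rw [norm_of_nonneg (by have := hr.1; positivity)]
  exact inv_mul_sin_div_sq_le hk hr.1

theorem abs_integral_inv_mul_sin_div_sq_mul_le {F : ℝ → ℝ} {M : ℝ}
    (hM : ∀ r ∈ Icc (0:ℝ) 1, |F r| ≤ M) (hk : 0 < k) :
    |∫ r in (0:ℝ)..1, 1 / r * (sin (k * π * r) / k) ^ 2 * F r| ≤ π * M / k := by
  have hbound := intervalIntegral.norm_integral_le_of_norm_le_const (a := 0) (b := 1)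
    (C := π / k * M) (f := fun r => 1 / r * (sin (k * π * r) / k) ^ 2 * F r) <| by
    intro r hr
    rw [uIoc_of_le zero_le_one] at hr
    rw [norm_mul, norm_of_nonneg (by have := hr.1; positivity), norm_eq_abs]
    exact mul_le_mul (inv_mul_sin_div_sq_le hk hr.1) (hM r (Ioc_subset_Icc_self hr))
      (abs_nonneg _) (by positivity)
  rw [norm_eq_abs] at hbound
  calc _ ≤ π / k * M * |1 - 0| := hbound
    _ = π * M / k := by norm_num; ring

theorem deriv_sin_mul_div (hk : k ≠ 0) (r : ℝ) :
    deriv (fun s => sin (k * π * s) / k) r = π * cos (k * π * r) := by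
  have h : HasDerivAt (fun s => sin (k * π * s) / k) (cos (k * π * r) * (k * π * 1) / k) r :=
    (((hasDerivAt_id r).const_mul (k * π)).sin).div_const k
  rw [h.deriv]
  field_simp

end SineModes

theorem integral_cos_nat_mul_pi_sq {k : ℕ} (hk : k ≠ 0) :
    ∫ r in (0:ℝ)..1, cos (k * π * r) ^ 2 = 1 / 2 := by
  have hkπ : (k : ℝ) * π ≠ 0 := by positivity
  rw [intervalIntegral.integral_comp_mul_left (fun x => cos x ^ 2) hkπ, integral_cos_sq]
  simp only [mul_one, mul_zero, sin_nat_mul_pi, cos_zero, sin_zero, smul_eq_mul]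
  field_simp
  ring

theorem le_integral_inv_mul_sin_div_sq_add_deriv_sq {k : ℕ} (hk : k ≠ 0) :
    π ^ 2 / 2 ≤ ∫ r in (0:ℝ)..1, (1 / r * (sin (k * π * r) / k) ^ 2
      + (deriv (fun s => sin (k * π * s) / k) r) ^ 2) := by
  have hk' : (0 : ℝ) < k := by positivity
  simp only [deriv_sin_mul_div hk'.ne', mul_pow]
  have hcos : IntervalIntegrable (fun r => π ^ 2 * cos (k * π * r) ^ 2) volume 0 1 :=
    Continuous.intervalIntegrable (by fun_prop) 0 1
  calc π ^ 2 / 2 = ∫ r in (0:ℝ)..1, π ^ 2 * cos (k * π * r) ^ 2 := by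
        rw [intervalIntegral.integral_const_mul, integral_cos_nat_mul_pi_sq hk]; ring
    _ ≤ _ := by
      refine intervalIntegral.integral_mono_on zero_le_one hcos
        ((intervalIntegrable_inv_mul_sin_div_sq hk').add hcos) fun r hr => ?_
      have := hr.1
      simp only [le_add_iff_nonneg_left]
      positivity

theorem abs_rayleigh_quotient_sin_mode_le {F : ℝ → ℝ} {M : ℝ}
    (hM : ∀ r ∈ Icc (0:ℝ) 1, |F r| ≤ M) {k : ℕ} (hk : k ≠ 0) :
    |(∫ r in (0:ℝ)..1, 1 / r * (sin (k * π * r) / k) ^ 2 * F r) /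
      ∫ r in (0:ℝ)..1, (1 / r * (sin (k * π * r) / k) ^ 2
        + (deriv (fun s => sin (k * π * s) / k) r) ^ 2)| ≤ 2 * M / π / k := by
  have hk' : (0 : ℝ) < k := by positivity
  have hQ := abs_integral_inv_mul_sin_div_sq_mul_le hM hk'
  have hD := le_integral_inv_mul_sin_div_sq_add_deriv_sq hk
  have hD_pos := (by positivity : (0:ℝ) < π ^ 2 / 2).trans_le hD
  rw [abs_div, abs_of_pos hD_pos]
  calc _ ≤ π * M / k / (π ^ 2 / 2) :=
        div_le_div₀ ((abs_nonneg _).trans hQ) hQ (by positivity) hD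
    _ = 2 * M / π / k := by field_simp

theorem curvature_not_bounded_below_general
    (F : ℝ → ℝ)
    (hFpos : ∀ r ∈ Ioc (0:ℝ) 1, 0 < F r)
    (hFbdd : ∃ M : ℝ, ∀ r ∈ Icc (0:ℝ) 1, |F r| ≤ M) :
    (∀ g : ℝ → ℝ, ContDiff ℝ 1 g → g 0 = 0 →
      IntervalIntegrable (fun r => (1 / r) * g r ^ 2 * F r) MeasureTheory.volume 0 1 →
      (∫ r in (0:ℝ)..1, (1 / r) * g r ^ 2 * F r) = 0 →
      ∀ r ∈ Icc (0:ℝ) 1, g r = 0) ∧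
    Tendsto (fun k : ℕ =>
      (∫ r in (0:ℝ)..1, (1 / r) * (Real.sin (k * π * r) / k) ^ 2 * F r) /
      (∫ r in (0:ℝ)..1, ((1 / r) * (Real.sin (k * π * r) / k) ^ 2
        + (deriv (fun s => Real.sin (k * π * s) / k) r) ^ 2)))
      atTop (nhds 0) := by
  constructor
  · intro g hg hg0 hint hQ r hr
    have hweight : (fun r => 1 / r * g r ^ 2 * F r) = fun r => 1 / r * F r * g r ^ 2 := by
      ext; ring
    rw [hweight] at hint hQ
    rcases hr.1.eq_or_lt with rfl | hr0
    · exact hg0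
    exact hg.continuous.eqOn_zero_of_intervalIntegral_mul_sq_eq_zero zero_le_one
      (fun s hs => mul_pos (one_div_pos.2 hs.1) (hFpos s hs)) hint hQ ⟨hr0, hr.2⟩
  · obtain ⟨M, hM⟩ := hFbdd
    refine squeeze_zero_norm' (a := fun k : ℕ => 2 * M / π / k) ?_
      (tendsto_const_div_atTop_nhds_zero_nat _)
    filter_upwards [eventually_ne_atTop 0] with k hk
    exact abs_rayleigh_quotient_sin_mode_le hM hk

/-- The weighted quadratic form `Q(g) = ∫₀¹ (1/r)|g|² F` is definite on C¹ functions
vanishing at 0, yet for `g_k(r) = sin(kπr)/k` the ratio of `Q(g_k)` to the H¹-type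
denominator tends to 0, provided `F` is bounded. -/
theorem curvature_not_bounded_below
    (F : ℝ → ℝ) (hFc : ContinuousOn F (Icc 0 1))
    (hFpos : ∀ r ∈ Ioc (0:ℝ) 1, 0 < F r)
    (hFbdd : ∃ M : ℝ, ∀ r ∈ Icc (0:ℝ) 1, |F r| ≤ M) :
    (∀ g : ℝ → ℝ, ContDiff ℝ 1 g → g 0 = 0 →
      IntervalIntegrable (fun r => (1 / r) * g r ^ 2 * F r) MeasureTheory.volume 0 1 →
      (∫ r in (0:ℝ)..1, (1 / r) * g r ^ 2 * F r) = 0 →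
      ∀ r ∈ Icc (0:ℝ) 1, g r = 0) ∧
    Tendsto (fun k : ℕ =>
      (∫ r in (0:ℝ)..1, (1 / r) * (Real.sin (k * π * r) / k) ^ 2 * F r) /
      (∫ r in (0:ℝ)..1, ((1 / r) * (Real.sin (k * π * r) / k) ^ 2
        + (deriv (fun s => Real.sin (k * π * s) / k) r) ^ 2)))
      atTop (nhds 0) :=
  curvature_not_bounded_below_general F hFpos hFbdd
end
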